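/- Let E be an ordered real vector space with order induced by a cone C, let ω ∈ C, and let L: E → ℝ be a linear functional that is nonnegative on C with L(ω) > 0. Suppose there is a constant K > 0 such that every α ∈ C satisfies α ≤ K·L(α)·ω (Siu-type inequality). Then for every α ∈ C, one has (1/L(ω))·L(α) ≤ ‖α‖_ω ≤ K·L(α), where ‖α‖_ω = inf{t ≥ 0 : −tω ≤ α ≤ tω}. -/
import Mathlib


/-- The gauge norm `‖α‖_ω = inf{t ≥ 0 : -t•ω ≤ α ≤ t•ω}` relative to a cone `C`. -/
noncomputable def gaugeNorm {E : Type*} [AddCommGroup E] [Module ℝ E]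
    (C : Set E) (ω α : E) : ℝ :=
  sInf {t : ℝ | 0 ≤ t ∧ t • ω - α ∈ C ∧ t • ω + α ∈ C}

/-- Abstract Lemma 1.7, equation (8): if `L` is a positive linear functional on
the cone `C` with `L ω > 0` and the Siu-type inequality `α ≤ K·L(α)·ω` holds on
`C`, then `(1/L ω)·L α ≤ ‖α‖_ω ≤ K·L α` for all `α ∈ C`. -/
theorem stmt_10 {E : Type*} [AddCommGroup E] [Module ℝ E]
    (C : Set E)
    (hadd : ∀ x ∈ C, ∀ y ∈ C, x + y ∈ C)
    (hsmul : ∀ t : ℝ, 0 ≤ t → ∀ x ∈ C, t • x ∈ C)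
    (ω : E) (hω : ω ∈ C)
    (L : E →ₗ[ℝ] ℝ) (hL : ∀ x ∈ C, 0 ≤ L x) (hLω : 0 < L ω)
    (K : ℝ) (hK : 0 < K)
    (hSiu : ∀ α ∈ C, (K * L α) • ω - α ∈ C) :
    ∀ α ∈ C, (1 / L ω) * L α ≤ gaugeNorm C ω α ∧ gaugeNorm C ω α ≤ K * L α := by
  intro α hα
  have hLα : 0 ≤ L α := hL α hα
  have hmem : K * L α ∈ {t : ℝ | 0 ≤ t ∧ t • ω - α ∈ C ∧ t • ω + α ∈ C} := by
    refine ⟨mul_nonneg hK.le hLα, hSiu α hα, hadd _ (hsmul _ (mul_nonneg hK.le hLα) _ hω) _ hα⟩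
  constructor
  · apply le_csInf ⟨_, hmem⟩
    rintro t ⟨ht0, ht1, -⟩
    have := hL _ ht1
    rw [map_sub, map_smul, smul_eq_mul, sub_nonneg] at this
    rw [div_mul_eq_mul_div, div_le_iff₀ hLω, one_mul]
    exact this
  · exact csInf_le ⟨0, fun t ht => ht.1⟩ hmem
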